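/- Let n ≥ 1, let 1 < p₀ < ∞ and β ≥ 0, and let T be an operator (not necessarily linear) mapping measurable functions on ℝ^n to measurable functions. Assume there is a constant c > 0 such that for every weight w ∈ A_{p₀} and every f with ‖f‖_{L^{p₀}(w)} < ∞ one has ‖Tf‖_{L^{p₀}(w)} ≤ c [w]_{A_{p₀}}^β ‖f‖_{L^{p₀}(w)}. Then there is a constant c' > 0, depending only on c, β, p₀ and n, such that for every p with 1 < p < p₀, ‖T‖_{L^p(ℝ^n)} ≤ c' ‖M‖_{L^p(ℝ^n)}^{β(p₀−p)}. -/

import Mathlib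

open MeasureTheory Filter
open scoped ENNReal NNReal

/-- A (closed) cube in ℝⁿ with sides parallel to the coordinate axes. -/
def IsCube (n : ℕ) (Q : Set (Fin n → ℝ)) : Prop :=
  ∃ (a : Fin n → ℝ) (h : ℝ), 0 < h ∧ Q = {y | ∀ i, y i ∈ Set.Icc (a i) (a i + h)}

/-- Average of an `ℝ≥0∞`-valued function over a set. -/
noncomputable def setAvg (n : ℕ) (Q : Set (Fin n → ℝ)) (g : (Fin n → ℝ) → ℝ≥0∞) : ℝ≥0∞ :=
  (volume Q)⁻¹ * ∫⁻ y in Q, g y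

/-- The Muckenhoupt `A_p` constant of a weight `w`. -/
noncomputable def ApConst (n : ℕ) (p : ℝ) (w : (Fin n → ℝ) → ℝ≥0∞) : ℝ≥0∞ :=
  ⨆ (Q : Set (Fin n → ℝ)) (_ : IsCube n Q),
    setAvg n Q w * (setAvg n Q fun y => w y ^ (1 - p / (p - 1))) ^ (p - 1)

/-- A weight: a measurable nonnegative (`ℝ≥0∞`-valued) locally integrable function. -/
def IsWeight (n : ℕ) (w : (Fin n → ℝ) → ℝ≥0∞) : Prop :=
  Measurable w ∧ ∀ Q : Set (Fin n → ℝ), IsCube n Q → (∫⁻ y in Q, w y) < ∞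

/-- Weighted L^p norm of an `ℝ≥0∞`-valued function. -/
noncomputable def wLpNormE (n : ℕ) (p : ℝ) (w : (Fin n → ℝ) → ℝ≥0∞)
    (g : (Fin n → ℝ) → ℝ≥0∞) : ℝ≥0∞ :=
  (∫⁻ x, g x ^ p * w x) ^ (1 / p)

/-- Weighted L^p norm of a real function. -/
noncomputable def wLpNorm (n : ℕ) (p : ℝ) (w : (Fin n → ℝ) → ℝ≥0∞)
    (f : (Fin n → ℝ) → ℝ) : ℝ≥0∞ :=
  wLpNormE n p w fun x => (‖f x‖₊ : ℝ≥0∞)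

/-- Unweighted L^p norm of a real function on ℝⁿ. -/
noncomputable def lpNorm (n : ℕ) (p : ℝ) (f : (Fin n → ℝ) → ℝ) : ℝ≥0∞ :=
  (∫⁻ x, (‖f x‖₊ : ℝ≥0∞) ^ p) ^ (1 / p)

/-- Unweighted L^p norm of an `ℝ≥0∞`-valued function on ℝⁿ. -/
noncomputable def lpNormE (n : ℕ) (p : ℝ) (g : (Fin n → ℝ) → ℝ≥0∞) : ℝ≥0∞ :=
  (∫⁻ x, g x ^ p) ^ (1 / p)

/-- Operator norm on unweighted `L^p(ℝⁿ)`: the least `C ∈ [0,∞]` with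
`‖Tf‖_p ≤ C ‖f‖_p` for all `f ∈ L^p`. -/
noncomputable def opNorm (n : ℕ) (p : ℝ)
    (T : ((Fin n → ℝ) → ℝ) → (Fin n → ℝ) → ℝ) : ℝ≥0∞ :=
  sInf {C : ℝ≥0∞ | ∀ f : (Fin n → ℝ) → ℝ, Measurable f → lpNorm n p f < ∞ →
    lpNorm n p (T f) ≤ C * lpNorm n p f}

/-- The Hardy–Littlewood maximal operator (over cubes with sides parallel to the axes). -/
noncomputable def HLM (n : ℕ) (g : (Fin n → ℝ) → ℝ≥0∞) : (Fin n → ℝ) → ℝ≥0∞ :=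
  fun x => ⨆ (Q : Set (Fin n → ℝ)) (_ : IsCube n Q) (_ : x ∈ Q), setAvg n Q g

/-- The operator norm of the Hardy–Littlewood maximal operator on `L^p(ℝⁿ)`. -/
noncomputable def maximalOpNorm (n : ℕ) (p : ℝ) : ℝ≥0∞ :=
  sInf {C : ℝ≥0∞ | ∀ f : (Fin n → ℝ) → ℝ, Measurable f → lpNorm n p f < ∞ →
    lpNormE n p (HLM n fun y => (‖f y‖₊ : ℝ≥0∞)) ≤ C * lpNorm n p f}

/-!
Rubio de Francia extrapolation. Fix `1 < p < p₀` and `f ∈ L^p`, and let `N = ‖M‖_{L^p}`, which is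
finite by the Hardy–Littlewood maximal theorem (Vitali covering for the weak type `(1, 1)` bound,
then a dyadic decomposition of the level sets). The majorant `u = ∑ₖ (2N)^{-k} M^k |f|` satisfies
`|f| ≤ u`, `‖u‖_p ≤ 2 ‖f‖_p` and `M u ≤ 2N u`, so `w = u^{p - p₀}` is an `A_{p₀}` weight with
`[w]_{A_{p₀}} ≤ (2N)^{p₀ - p}`. By Hölder, `‖Tf‖_p ≤ ‖Tf‖_{L^{p₀}(w)} ‖u‖_p^{1 - p/p₀}`, while
`‖f‖_{L^{p₀}(w)} ≤ ‖u‖_p^{p/p₀}` because `|f| ≤ u`; the weighted bound then gives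
`‖Tf‖_p ≤ c (2N)^{β(p₀ - p)} ‖u‖_p ≤ 2c (2N)^{β(p₀ - p)} ‖f‖_p`.
-/

open Metric Set Topology

variable {n : ℕ}

lemma closedBall_eq_setOf_forall_mem_Icc (z : Fin n → ℝ) {r : ℝ} (hr : 0 ≤ r) :
    closedBall z r = {y | ∀ i, y i ∈ Icc (z i - r) (z i + r)} := by
  ext y
  simp only [closedBall_pi z hr, Real.closedBall_eq_Icc, mem_univ_pi]
  rfl

lemma isCube_closedBall (z : Fin n → ℝ) {r : ℝ} (hr : 0 < r) : IsCube n (closedBall z r) := by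
  refine ⟨fun i => z i - r, 2 * r, by positivity, ?_⟩
  rw [closedBall_eq_setOf_forall_mem_Icc z hr.le]
  ext y
  refine forall_congr' fun i => ?_
  rw [show z i - r + 2 * r = z i + r by ring]

lemma IsCube.exists_eq_closedBall {Q : Set (Fin n → ℝ)} (hQ : IsCube n Q) :
    ∃ z r, 0 < r ∧ Q = closedBall z r := by
  obtain ⟨a, h, hh, rfl⟩ := hQ
  refine ⟨fun i => a i + h / 2, h / 2, by positivity, ?_⟩
  rw [closedBall_eq_setOf_forall_mem_Icc _ (by positivity)]
  ext y
  refine forall_congr' fun i => ?_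
  rw [add_sub_cancel_right, add_assoc, add_halves]

lemma volume_closedBall_fin (z : Fin n → ℝ) {r : ℝ} (hr : 0 ≤ r) :
    volume (closedBall z r) = ENNReal.ofReal ((2 * r) ^ n) := by
  simp [Real.volume_pi_closedBall z hr]

lemma IsCube.measurableSet {Q : Set (Fin n → ℝ)} (hQ : IsCube n Q) : MeasurableSet Q := by
  obtain ⟨z, r, -, rfl⟩ := hQ.exists_eq_closedBall
  exact measurableSet_closedBall

lemma IsCube.volume_ne_zero {Q : Set (Fin n → ℝ)} (hQ : IsCube n Q) : volume Q ≠ 0 := by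
  obtain ⟨z, r, hr, rfl⟩ := hQ.exists_eq_closedBall
  rw [volume_closedBall_fin z hr.le]
  positivity

lemma IsCube.volume_ne_top {Q : Set (Fin n → ℝ)} (hQ : IsCube n Q) : volume Q ≠ ∞ := by
  obtain ⟨z, r, -, rfl⟩ := hQ.exists_eq_closedBall
  exact measure_closedBall_lt_top.ne

section MaximalFunction

variable {g g' : (Fin n → ℝ) → ℝ≥0∞} {Q : Set (Fin n → ℝ)} {x : Fin n → ℝ}

lemma setAvg_le_HLM (hQ : IsCube n Q) (hx : x ∈ Q) : setAvg n Q g ≤ HLM n g x :=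
  le_iSup_of_le Q (le_iSup_of_le hQ (le_iSup_of_le hx le_rfl))

lemma HLM_le {A : ℝ≥0∞} (h : ∀ Q, IsCube n Q → x ∈ Q → setAvg n Q g ≤ A) : HLM n g x ≤ A :=
  iSup_le fun Q => iSup_le fun hQ => iSup_le fun hx => h Q hQ hx

lemma lt_HLM_iff {A : ℝ≥0∞} : A < HLM n g x ↔ ∃ Q, IsCube n Q ∧ x ∈ Q ∧ A < setAvg n Q g := by
  simp only [HLM, lt_iSup_iff, exists_prop]

lemma setAvg_le_of_forall_le (hQ : IsCube n Q) {c : ℝ≥0∞} (h : ∀ y ∈ Q, g y ≤ c) :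
    setAvg n Q g ≤ c := by
  calc setAvg n Q g ≤ (volume Q)⁻¹ * ∫⁻ _ in Q, c :=
        mul_le_mul_right (setLIntegral_mono measurable_const h) _
    _ = c := by
        rw [setLIntegral_const, mul_comm c, ← mul_assoc,
          ENNReal.inv_mul_cancel hQ.volume_ne_zero hQ.volume_ne_top, one_mul]

lemma setLIntegral_eq_volume_mul_setAvg (hQ : IsCube n Q) (g : (Fin n → ℝ) → ℝ≥0∞) :
    ∫⁻ y in Q, g y = volume Q * setAvg n Q g := by
  rw [setAvg, ← mul_assoc, ENNReal.mul_inv_cancel hQ.volume_ne_zero hQ.volume_ne_top, one_mul]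

lemma HLM_ne_zero (hg : Measurable g) (h : ¬ g =ᵐ[volume] 0) (x : Fin n → ℝ) : HLM n g x ≠ 0 := by
  obtain ⟨m, hm⟩ : ∃ m : ℕ, ∫⁻ y in closedBall 0 m, g y ≠ 0 := by
    by_contra! hzero
    refine h ?_
    rw [Filter.EventuallyEq, ← Measure.restrict_univ (μ := volume),
      ← iUnion_closedBall_nat (0 : Fin n → ℝ), ae_restrict_iUnion_iff]
    exact fun m => (lintegral_eq_zero_iff hg).1 (hzero m)
  have hR : 0 < (m : ℝ) + dist x 0 + 1 := by positivity
  refine (pos_iff_ne_zero.1 (lt_of_lt_of_le ?_ (setAvg_le_HLM (isCube_closedBall 0 hR)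
    (mem_closedBall.2 (by linarith [m.cast_nonneg (α := ℝ)])))))
  refine ENNReal.mul_pos (ENNReal.inv_ne_zero.2 measure_closedBall_lt_top.ne)
    ((pos_iff_ne_zero.2 hm).trans_le (lintegral_mono_set (closedBall_subset_closedBall ?_))).ne'
  linarith [dist_nonneg (x := x) (y := 0)]

lemma HLM_congr_ae (h : g =ᵐ[volume] g') : HLM n g = HLM n g' := by
  funext x
  simp only [HLM, setAvg, lintegral_congr_ae (ae_restrict_of_ae h)]

lemma HLM_const_mul_le (c : ℝ≥0∞) (hg : Measurable g) (x : Fin n → ℝ) :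
    HLM n (fun y => c * g y) x ≤ c * HLM n g x :=
  HLM_le fun Q hQ hx => by
    rw [setAvg, lintegral_const_mul _ hg, mul_left_comm]
    exact mul_le_mul_right (setAvg_le_HLM hQ hx) c

lemma HLM_tsum_le {G : ℕ → (Fin n → ℝ) → ℝ≥0∞} (hG : ∀ k, Measurable (G k)) (x : Fin n → ℝ) :
    HLM n (fun y => ∑' k, G k y) x ≤ ∑' k, HLM n (G k) x :=
  HLM_le fun Q hQ hx => by
    rw [setAvg, lintegral_tsum fun k => (hG k).aemeasurable, ← ENNReal.tsum_mul_left]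
    exact ENNReal.tsum_le_tsum fun k => setAvg_le_HLM hQ hx

/-- An average over a cube containing `x` is nearly attained over slightly larger concentric cubes,
which contain a neighbourhood of `x`. -/
lemma lowerSemicontinuous_HLM (g : (Fin n → ℝ) → ℝ≥0∞) : LowerSemicontinuous (HLM n g) := by
  intro x A hA
  obtain ⟨Q, hQ, hxQ, hAQ⟩ := lt_HLM_iff.1 hA
  obtain ⟨z, r, hr, rfl⟩ := hQ.exists_eq_closedBall
  set I := ∫⁻ y in closedBall z r, g y
  have hlim : Tendsto (fun δ : ℝ => (ENNReal.ofReal ((2 * (r + δ)) ^ n))⁻¹ * I) (𝓝 0)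
      (𝓝 (setAvg n (closedBall z r) g)) := by
    simp only [setAvg, volume_closedBall_fin z hr.le]
    refine ENNReal.Tendsto.mul_const (Tendsto.inv ?_) (Or.inl (by simp))
    have hcont : Continuous fun δ : ℝ => ENNReal.ofReal ((2 * (r + δ)) ^ n) :=
      ENNReal.continuous_ofReal.comp (by fun_prop)
    simpa using hcont.tendsto 0
  obtain ⟨ε, hε, hball⟩ := Metric.eventually_nhds_iff.1 (hlim.eventually_const_lt hAQ)
  have hδ : 0 < ε / 2 := by positivity
  filter_upwards [ball_mem_nhds x hδ] with y hy
  have hyQ : y ∈ closedBall z (r + ε / 2) := by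
    have := dist_triangle y x z
    rw [mem_ball] at hy; rw [mem_closedBall] at hxQ ⊢; linarith
  refine (hball (by rw [Real.dist_eq, sub_zero, abs_of_pos hδ]; linarith)).trans_le ?_
  refine le_trans ?_ (setAvg_le_HLM (isCube_closedBall z (by positivity)) hyQ)
  simp only [setAvg, volume_closedBall_fin z (by positivity : 0 ≤ r + ε / 2)]
  exact mul_le_mul_right (lintegral_mono_set (closedBall_subset_closedBall (by linarith))) _

@[fun_prop]
lemma measurable_HLM (g : (Fin n → ℝ) → ℝ≥0∞) : Measurable (HLM n g) :=
  (lowerSemicontinuous_HLM g).measurable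

end MaximalFunction

section WeakType

variable {g : (Fin n → ℝ) → ℝ≥0∞} {t : ℝ≥0∞}

lemma volume_le_of_lt_setAvg {Q : Set (Fin n → ℝ)} (hQ : IsCube n Q) (ht : t ≠ 0)
    (h : t < setAvg n Q g) : volume Q ≤ t⁻¹ * ∫⁻ y in Q, g y := by
  have htop := h.ne_top
  rw [setAvg, ← ENNReal.div_eq_inv_mul,
    ENNReal.lt_div_iff_mul_lt (Or.inl hQ.volume_ne_zero) (Or.inl hQ.volume_ne_top)] at h
  rw [← ENNReal.div_eq_inv_mul, ENNReal.le_div_iff_mul_le (Or.inl ht) (Or.inl htop), mul_comm]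
  exact h.le

lemma volume_closedBall_four_mul (z : Fin n → ℝ) {r : ℝ} (hr : 0 ≤ r) :
    volume (closedBall z (4 * r)) = 4 ^ n * volume (closedBall z r) := by
  rw [volume_closedBall_fin z hr, volume_closedBall_fin z (by positivity),
    show 2 * (4 * r) = 4 * (2 * r) by ring, mul_pow, ENNReal.ofReal_mul (by positivity),
    ENNReal.ofReal_pow (by norm_num)]
  norm_num

/-- Vitali covering: a cube on which `g` averages more than `t` has volume at most `t⁻¹ ∫ g`,
hence a bounded radius. -/
lemma volume_lt_HLM_le (hn : 1 ≤ n) (ht : t ≠ 0) (hg : ∫⁻ y, g y ≠ ∞) :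
    volume {x | t < HLM n g x} ≤ 4 ^ n * t⁻¹ * ∫⁻ y, g y := by
  set B : Set ((Fin n → ℝ) × ℝ) := {q | 0 < q.2 ∧ t < setAvg n (closedBall q.1 q.2) g}
  have hvol : ∀ q ∈ B, volume (closedBall q.1 q.2) ≤ t⁻¹ * ∫⁻ y in closedBall q.1 q.2, g y :=
    fun q hq => volume_le_of_lt_setAvg (isCube_closedBall q.1 hq.1) ht hq.2
  have hR : ∀ q ∈ B, q.2 ≤ max 1 (t⁻¹ * ∫⁻ y, g y).toReal := by
    intro q hq
    have hpow : (2 * q.2) ^ n ≤ (t⁻¹ * ∫⁻ y, g y).toReal := by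
      rw [← ENNReal.ofReal_le_iff_le_toReal (ENNReal.mul_ne_top (by simpa) hg),
        ← volume_closedBall_fin q.1 hq.1.le]
      exact (hvol q hq).trans (mul_le_mul_right (setLIntegral_le_lintegral _ _) _)
    rcases le_or_gt (2 * q.2) 1 with h1 | h1
    · exact le_max_of_le_left (by linarith [hq.1])
    · exact le_max_of_le_right (by nlinarith [le_self_pow₀ h1.le (by omega : n ≠ 0)])
  obtain ⟨u, huB, hdisj, hcov⟩ := Vitali.exists_disjoint_subfamily_covering_enlargement_closedBall
    B Prod.fst Prod.snd _ hR 4 (by norm_num)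
  have hu : u.Countable := hdisj.countable_of_nonempty_interior fun q hq => by
    rw [interior_closedBall _ (huB hq).1.ne']
    exact ⟨q.1, mem_ball_self (huB hq).1⟩
  have hcover : {x | t < HLM n g x} ⊆ ⋃ q ∈ u, closedBall q.1 (4 * q.2) := by
    intro x hx
    obtain ⟨Q, hQ, hxQ, htQ⟩ := lt_HLM_iff.1 hx
    obtain ⟨z, r, hr, rfl⟩ := hQ.exists_eq_closedBall
    obtain ⟨q, hqu, hsub⟩ := hcov (z, r) ⟨hr, htQ⟩
    exact mem_biUnion hqu (hsub hxQ)
  calc volume {x | t < HLM n g x}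
      ≤ ∑' q : u, volume (closedBall (q : (Fin n → ℝ) × ℝ).1 (4 * (q : (Fin n → ℝ) × ℝ).2)) :=
        (measure_mono hcover).trans (measure_biUnion_le _ hu _)
    _ ≤ ∑' q : u, 4 ^ n * (t⁻¹ * ∫⁻ y in closedBall (q : (Fin n → ℝ) × ℝ).1 q.1.2, g y) := by
        refine ENNReal.tsum_le_tsum fun q => ?_
        rw [volume_closedBall_four_mul _ (huB q.2).1.le]
        exact mul_le_mul_right (hvol q (huB q.2)) _
    _ = 4 ^ n * t⁻¹ * ∫⁻ y in ⋃ q ∈ u, closedBall q.1 q.2, g y := by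
        rw [lintegral_biUnion hu (fun _ _ => measurableSet_closedBall) hdisj, ENNReal.tsum_mul_left,
          ENNReal.tsum_mul_left, mul_assoc]
    _ ≤ 4 ^ n * t⁻¹ * ∫⁻ y, g y := mul_le_mul_right (setLIntegral_le_lintegral _ _) _

lemma HLM_le_HLM_indicator_add (t : ℝ≥0∞) (x : Fin n → ℝ) :
    HLM n g x ≤ HLM n ({y | t < g y}.indicator g) x + t := by
  refine HLM_le fun Q hQ hx => ?_
  have hpt : ∀ y, g y ≤ {y | t < g y}.indicator g y + t := by
    intro y
    by_cases hy : t < g y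
    · simp [hy]
    · simpa [hy] using not_lt.1 hy
  calc setAvg n Q g ≤ (volume Q)⁻¹ * ∫⁻ y in Q, ({y | t < g y}.indicator g y + t) :=
        mul_le_mul_right (lintegral_mono hpt) _
    _ = setAvg n Q ({y | t < g y}.indicator g) + t := by
        rw [lintegral_add_right _ measurable_const, setLIntegral_const, mul_add, setAvg,
          mul_comm t, ← mul_assoc, ENNReal.inv_mul_cancel hQ.volume_ne_zero hQ.volume_ne_top,
          one_mul]
    _ ≤ HLM n ({y | t < g y}.indicator g) x + t := add_le_add_left (setAvg_le_HLM hQ hx) _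

/-- The weak type inequality at height `2 t` only sees the part of `g` above `t`. -/
lemma volume_two_mul_lt_HLM_le (hn : 1 ≤ n) (hg : Measurable g) (ht : t ≠ 0) :
    volume {x | 2 * t < HLM n g x} ≤ 4 ^ n * t⁻¹ * ∫⁻ y in {y | t < g y}, g y := by
  have hS : MeasurableSet {y | t < g y} := hg measurableSet_Ioi
  rcases eq_or_ne t ∞ with rfl | htop
  · simp
  rcases eq_or_ne (∫⁻ y in {y | t < g y}, g y) ∞ with hI | hI
  · rw [hI, ENNReal.mul_top (by simp [htop])]
    exact le_top
  have hsub : {x | 2 * t < HLM n g x} ⊆ {x | t < HLM n ({y | t < g y}.indicator g) x} := by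
    intro x hx
    have := hx.trans_le (HLM_le_HLM_indicator_add t x)
    rwa [two_mul, ENNReal.add_lt_add_iff_right htop] at this
  calc volume {x | 2 * t < HLM n g x}
      ≤ volume {x | t < HLM n ({y | t < g y}.indicator g) x} := measure_mono hsub
    _ ≤ 4 ^ n * t⁻¹ * ∫⁻ y, {y | t < g y}.indicator g y :=
        volume_lt_HLM_le hn ht (by rwa [lintegral_indicator hS])
    _ = 4 ^ n * t⁻¹ * ∫⁻ y in {y | t < g y}, g y := by rw [lintegral_indicator hS]

end WeakType

section StrongType

noncomputable def dyadicSum (a : ℝ) (v : ℝ≥0∞) : ℝ≥0∞ :=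
  ∑' j : ℤ, (Ioi ((2 : ℝ≥0∞) ^ (j : ℝ))).indicator (fun _ => (2 : ℝ≥0∞) ^ ((j : ℝ) * a)) v

@[fun_prop]
lemma measurable_dyadicSum (a : ℝ) : Measurable (dyadicSum a) :=
  Measurable.tsum fun _ => measurable_const.indicator measurableSet_Ioi

lemma exists_two_rpow_lt_le {v : ℝ≥0∞} (hv0 : v ≠ 0) (hvt : v ≠ ∞) :
    ∃ J : ℤ, (2 : ℝ≥0∞) ^ (J : ℝ) < v ∧ v ≤ 2 ^ ((J : ℝ) + 1) := by
  obtain ⟨J, hJ⟩ := ENNReal.exists_mem_Ioc_zpow hv0 hvt (by norm_num : (1 : ℝ≥0∞) < 2)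
    ENNReal.ofNat_ne_top
  refine ⟨J, ?_, ?_⟩
  · simpa [ENNReal.rpow_intCast] using hJ.1
  · simpa [← ENNReal.rpow_intCast] using hJ.2

lemma rpow_le_two_rpow_mul_dyadicSum {a : ℝ} (ha : 0 < a) (v : ℝ≥0∞) :
    v ^ a ≤ 2 ^ a * dyadicSum a v := by
  rcases eq_or_ne v 0 with rfl | hv0
  · simp [ENNReal.zero_rpow_of_pos ha]
  rcases eq_or_ne v ∞ with rfl | hvt
  · suffices dyadicSum a ∞ = ∞ by simp [this]
    refine top_unique ?_
    calc ∞ = ∑' _ : ℕ, (1 : ℝ≥0∞) := (ENNReal.tsum_const_eq_top_of_ne_zero one_ne_zero).symm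
      _ ≤ ∑' k : ℕ, (Ioi ((2 : ℝ≥0∞) ^ ((k : ℤ) : ℝ))).indicator
            (fun _ => (2 : ℝ≥0∞) ^ (((k : ℤ) : ℝ) * a)) ∞ := by
          refine ENNReal.tsum_le_tsum fun k => ?_
          rw [indicator_of_mem (mem_Ioi.2
            (ENNReal.rpow_ne_top_of_nonneg' two_pos ENNReal.ofNat_ne_top).lt_top)]
          simpa using ENNReal.rpow_le_rpow_of_exponent_le (x := 2) one_le_two
            (by positivity : (0 : ℝ) ≤ ((k : ℤ) : ℝ) * a)
      _ ≤ dyadicSum a ∞ := ENNReal.tsum_comp_le_tsum_of_injective Nat.cast_injective _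
  obtain ⟨J, hJ, hvJ⟩ := exists_two_rpow_lt_le hv0 hvt
  calc v ^ a ≤ ((2 : ℝ≥0∞) ^ ((J : ℝ) + 1)) ^ a := ENNReal.rpow_le_rpow hvJ ha.le
    _ = 2 ^ a * (Ioi ((2 : ℝ≥0∞) ^ (J : ℝ))).indicator (fun _ => 2 ^ ((J : ℝ) * a)) v := by
        rw [indicator_of_mem (mem_Ioi.2 hJ), ← ENNReal.rpow_mul,
          ← ENNReal.rpow_add _ _ two_ne_zero ENNReal.ofNat_ne_top]
        ring_nf
    _ ≤ 2 ^ a * dyadicSum a v := mul_le_mul_right (ENNReal.le_tsum J) _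

lemma dyadicSum_le {a : ℝ} (ha : 0 < a) (v : ℝ≥0∞) :
    dyadicSum a v ≤ (1 - 2 ^ (-a))⁻¹ * v ^ a := by
  rcases eq_or_ne v 0 with rfl | hv0
  · simp [dyadicSum]
  rcases eq_or_ne v ∞ with rfl | hvt
  · rw [ENNReal.top_rpow_of_pos ha, ENNReal.mul_top (by simp)]
    exact le_top
  obtain ⟨J, hJ, hvJ⟩ := exists_two_rpow_lt_le hv0 hvt
  set term : ℤ → ℝ≥0∞ := fun j =>
    (Ioi ((2 : ℝ≥0∞) ^ (j : ℝ))).indicator (fun _ => (2 : ℝ≥0∞) ^ ((j : ℝ) * a)) v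
  have hsupp : term.support ⊆ range fun k : ℕ => J - k := by
    intro j hj
    have hjv : (2 : ℝ≥0∞) ^ (j : ℝ) < v := by
      by_contra h
      exact hj (indicator_of_notMem (fun h' => h (mem_Ioi.1 h')) _)
    have hjJ : j ≤ J := by
      by_contra! h
      refine (hjv.trans_le hvJ).not_ge (ENNReal.rpow_le_rpow_of_exponent_le one_le_two ?_)
      exact_mod_cast h
    exact ⟨(J - j).toNat, by simp only; omega⟩
  calc dyadicSum a v = ∑' k : ℕ, term (J - k) :=
        (Function.Injective.tsum_eq (fun k l h => by simpa using h) hsupp).symm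
    _ ≤ ∑' k : ℕ, 2 ^ ((J : ℝ) * a) * (2 ^ (-a)) ^ k := by
        refine ENNReal.tsum_le_tsum fun k => (indicator_le_self' (fun _ _ => bot_le) v).trans ?_
        rw [← ENNReal.rpow_natCast, ← ENNReal.rpow_mul,
          ← ENNReal.rpow_add _ _ two_ne_zero ENNReal.ofNat_ne_top]
        push_cast
        ring_nf
        rfl
    _ = (1 - 2 ^ (-a))⁻¹ * (2 ^ (J : ℝ)) ^ a := by
        rw [ENNReal.tsum_mul_left, ENNReal.tsum_geometric, ← ENNReal.rpow_mul, mul_comm]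
    _ ≤ (1 - 2 ^ (-a))⁻¹ * v ^ a := by gcongr

lemma lintegral_mul_dyadicSum {α : Type*} [MeasurableSpace α] {μ : Measure α} {f h : α → ℝ≥0∞}
    (hf : Measurable f) (hh : Measurable h) (a : ℝ) : ∫⁻ x, h x * dyadicSum a (f x) ∂μ =
      ∑' j : ℤ, 2 ^ ((j : ℝ) * a) * ∫⁻ x in {x | (2 : ℝ≥0∞) ^ (j : ℝ) < f x}, h x ∂μ := by
  have hterm : ∀ x, h x * dyadicSum a (f x) =
      ∑' j : ℤ, 2 ^ ((j : ℝ) * a) * {x | (2 : ℝ≥0∞) ^ (j : ℝ) < f x}.indicator h x := by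
    intro x
    rw [dyadicSum, ← ENNReal.tsum_mul_left]
    congr with j
    by_cases hx : (2 : ℝ≥0∞) ^ (j : ℝ) < f x
    · rw [indicator_of_mem (mem_Ioi.2 hx), indicator_of_mem (show x ∈ {x | _ < f x} from hx),
        mul_comm]
    · rw [indicator_of_notMem (fun h' => hx (mem_Ioi.1 h')),
        indicator_of_notMem (show x ∉ {x | _ < f x} from hx), mul_zero, mul_zero]
  have hS : ∀ j : ℤ, MeasurableSet {x | (2 : ℝ≥0∞) ^ (j : ℝ) < f x} :=
    fun _ => hf measurableSet_Ioi
  simp only [hterm]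
  rw [lintegral_tsum fun j => ((hh.indicator (hS j)).const_mul _).aemeasurable]
  congr with j
  rw [lintegral_const_mul _ (hh.indicator (hS j)), lintegral_indicator (hS j)]

lemma lintegral_rpow_le_tsum_volume {α : Type*} [MeasurableSpace α] {μ : Measure α}
    {f : α → ℝ≥0∞} (hf : Measurable f) {p : ℝ} (hp : 0 < p) :
    ∫⁻ x, f x ^ p ∂μ ≤
      2 ^ p * ∑' k : ℤ, 2 ^ (((k : ℝ) + 1) * p) * μ {x | 2 * (2 : ℝ≥0∞) ^ (k : ℝ) < f x} := by
  calc ∫⁻ x, f x ^ p ∂μ ≤ ∫⁻ x, 2 ^ p * (1 * dyadicSum p (f x)) ∂μ :=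
        lintegral_mono fun x => by rw [one_mul]; exact rpow_le_two_rpow_mul_dyadicSum hp _
    _ = 2 ^ p * ∑' j : ℤ, 2 ^ ((j : ℝ) * p) * μ {x | (2 : ℝ≥0∞) ^ (j : ℝ) < f x} := by
        rw [lintegral_const_mul _ (by fun_prop), lintegral_mul_dyadicSum hf measurable_const]
        simp only [setLIntegral_one]
    _ = 2 ^ p * ∑' k : ℤ, 2 ^ (((k : ℝ) + 1) * p) * μ {x | 2 * (2 : ℝ≥0∞) ^ (k : ℝ) < f x} := by
        rw [← (Equiv.addRight (1 : ℤ)).tsum_eq]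
        congr! 4 with k
        · simp
        · rw [Equiv.coe_addRight, Int.cast_add, Int.cast_one,
            ENNReal.rpow_add _ _ two_ne_zero ENNReal.ofNat_ne_top, ENNReal.rpow_one, mul_comm]

variable {g : (Fin n → ℝ) → ℝ≥0∞} {p : ℝ}

/-- Split the level sets of `HLM n g` dyadically, bound each by the weak type inequality and
resum with `dyadicSum`. -/
lemma lintegral_HLM_rpow_le (hn : 1 ≤ n) (hp : 1 < p) (hg : Measurable g) :
    ∫⁻ x, HLM n g x ^ p ≤ 2 ^ (2 * p) * 4 ^ n * (1 - 2 ^ (-(p - 1)))⁻¹ * ∫⁻ x, g x ^ p := by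
  have h2 : (2 : ℝ≥0∞) ≠ 0 := two_ne_zero
  have h2' : (2 : ℝ≥0∞) ≠ ∞ := ENNReal.ofNat_ne_top
  have hexp : ∀ k : ℝ, (2 : ℝ≥0∞) ^ p * (2 ^ ((k + 1) * p) * (2 ^ k)⁻¹) =
      2 ^ (2 * p) * 2 ^ (k * (p - 1)) := by
    intro k
    rw [← ENNReal.rpow_neg, ← ENNReal.rpow_add _ _ h2 h2', ← ENNReal.rpow_add _ _ h2 h2',
      ← ENNReal.rpow_add _ _ h2 h2']
    ring_nf
  calc ∫⁻ x, HLM n g x ^ p ≤ 2 ^ p * ∑' k : ℤ, 2 ^ (((k : ℝ) + 1) * p) *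
          volume {x | 2 * (2 : ℝ≥0∞) ^ (k : ℝ) < HLM n g x} :=
        lintegral_rpow_le_tsum_volume (measurable_HLM g) (by linarith)
    _ ≤ 2 ^ p * ∑' k : ℤ, 2 ^ (((k : ℝ) + 1) * p) *
          (4 ^ n * ((2 : ℝ≥0∞) ^ (k : ℝ))⁻¹ * ∫⁻ y in {y | (2 : ℝ≥0∞) ^ (k : ℝ) < g y}, g y) := by
        gcongr with k
        exact volume_two_mul_lt_HLM_le hn hg (ENNReal.rpow_pos two_pos h2').ne'
    _ = 2 ^ (2 * p) * 4 ^ n * ∑' k : ℤ, 2 ^ ((k : ℝ) * (p - 1)) *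
          ∫⁻ y in {y | (2 : ℝ≥0∞) ^ (k : ℝ) < g y}, g y := by
        rw [← ENNReal.tsum_mul_left, ← ENNReal.tsum_mul_left]
        refine tsum_congr fun k => ?_
        calc _ = (2 ^ p * (2 ^ (((k : ℝ) + 1) * p) * (2 ^ (k : ℝ))⁻¹)) *
              (4 ^ n * ∫⁻ y in {y | (2 : ℝ≥0∞) ^ (k : ℝ) < g y}, g y) := by ring
          _ = _ := by rw [hexp]; ring
    _ = 2 ^ (2 * p) * 4 ^ n * ∫⁻ x, g x * dyadicSum (p - 1) (g x) := by
        rw [lintegral_mul_dyadicSum hg hg]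
    _ ≤ 2 ^ (2 * p) * 4 ^ n * ∫⁻ x, g x * ((1 - 2 ^ (-(p - 1)))⁻¹ * g x ^ (p - 1)) := by
        gcongr with x
        exact dyadicSum_le (by linarith) _
    _ = 2 ^ (2 * p) * 4 ^ n * (1 - 2 ^ (-(p - 1)))⁻¹ * ∫⁻ x, g x ^ p := by
        rw [← lintegral_const_mul _ (by fun_prop), ← lintegral_const_mul _ (by fun_prop)]
        refine lintegral_congr fun x => ?_
        have hsplit : g x * g x ^ (p - 1) = g x ^ p := by
          simpa using
            (ENNReal.rpow_add_of_nonneg (x := g x) 1 (p - 1) zero_le_one (by linarith)).symm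
        rw [← hsplit]
        ring

lemma exists_lpNormE_HLM_le (hn : 1 ≤ n) (hp : 1 < p) :
    ∃ C ≠ ∞, ∀ g : (Fin n → ℝ) → ℝ≥0∞, Measurable g →
      lpNormE n p (HLM n g) ≤ C * lpNormE n p g := by
  refine ⟨(2 ^ (2 * p) * 4 ^ n * (1 - 2 ^ (-(p - 1)))⁻¹) ^ (1 / p), ?_, fun g hg => ?_⟩
  · refine ENNReal.rpow_ne_top_of_nonneg (by positivity) (ENNReal.mul_ne_top
      (ENNReal.mul_ne_top (ENNReal.rpow_ne_top_of_nonneg' two_pos ENNReal.ofNat_ne_top)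
        (ENNReal.pow_ne_top ENNReal.ofNat_ne_top)) ?_)
    exact ENNReal.inv_ne_top.2 (tsub_pos_of_lt
      (ENNReal.rpow_lt_one_of_one_lt_of_neg (by norm_num) (by linarith))).ne'
  rw [lpNormE, lpNormE, ← ENNReal.mul_rpow_of_nonneg _ _ (by positivity)]
  exact ENNReal.rpow_le_rpow (lintegral_HLM_rpow_le hn hp hg) (by positivity)

end StrongType

section LpNorm

variable {p : ℝ} {g g' : (Fin n → ℝ) → ℝ≥0∞}

lemma lpNormE_eq_eLpNorm' (p : ℝ) (g : (Fin n → ℝ) → ℝ≥0∞) :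
    lpNormE n p g = eLpNorm' g p volume := by
  simp [lpNormE, eLpNorm']

lemma lpNormE_congr_ae (h : g =ᵐ[volume] g') : lpNormE n p g = lpNormE n p g' := by
  rw [lpNormE_eq_eLpNorm', lpNormE_eq_eLpNorm', eLpNorm'_congr_ae h]

lemma lpNormE_eq_zero_iff (hp : 0 < p) (hg : Measurable g) :
    lpNormE n p g = 0 ↔ g =ᵐ[volume] 0 := by
  rw [lpNormE_eq_eLpNorm', eLpNorm'_eq_zero_iff hp hg.aestronglyMeasurable]

lemma lpNormE_mono (hp : 0 ≤ p) (h : ∀ x, g x ≤ g' x) : lpNormE n p g ≤ lpNormE n p g' := by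
  unfold lpNormE
  gcongr with x
  exact h x

lemma lintegral_rpow_ne_top_of_lpNormE_ne_top (hp : 0 < p) (h : lpNormE n p g ≠ ∞) :
    ∫⁻ x, g x ^ p ≠ ∞ := by
  rintro hI
  rw [lpNormE, hI, ENNReal.top_rpow_of_pos (by positivity)] at h
  exact h rfl

lemma ae_ne_top_of_lpNormE_ne_top (hp : 0 < p) (hg : Measurable g) (h : lpNormE n p g ≠ ∞) :
    ∀ᵐ x, g x ≠ ∞ := by
  filter_upwards [ae_lt_top (by fun_prop) (lintegral_rpow_ne_top_of_lpNormE_ne_top hp h)]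
    with x hx hgx
  rw [hgx, ENNReal.top_rpow_of_pos hp] at hx
  exact lt_irrefl _ hx

lemma lpNormE_const_mul (hp : 0 < p) (c : ℝ≥0∞) (hg : Measurable g) :
    lpNormE n p (fun x => c * g x) = c * lpNormE n p g := by
  simp only [lpNormE, ENNReal.mul_rpow_of_nonneg _ _ hp.le]
  rw [lintegral_const_mul _ (by fun_prop), ENNReal.mul_rpow_of_nonneg _ _ (by positivity),
    ← ENNReal.rpow_mul, mul_one_div_cancel hp.ne', ENNReal.rpow_one]

lemma lpNormE_iSup (hp : 0 < p) {S : ℕ → (Fin n → ℝ) → ℝ≥0∞} (hS : ∀ m, Measurable (S m))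
    (hmono : Monotone S) : lpNormE n p (fun x => ⨆ m, S m x) = ⨆ m, lpNormE n p (S m) := by
  have hpow : ∀ (q : ℝ) (hq : 0 < q) (a : ℕ → ℝ≥0∞), (⨆ m, a m) ^ q = ⨆ m, a m ^ q :=
    fun q hq a => (ENNReal.orderIsoRpow q hq).map_iSup a
  simp only [lpNormE, hpow p hp]
  rw [lintegral_iSup (fun m => by fun_prop) fun i j hij x => by gcongr; exact hmono hij x,
    hpow _ (by positivity)]

lemma lpNormE_tsum_le (hp : 1 ≤ p) {G : ℕ → (Fin n → ℝ) → ℝ≥0∞} (hG : ∀ k, Measurable (G k)) :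
    lpNormE n p (fun x => ∑' k, G k x) ≤ ∑' k, lpNormE n p (G k) := by
  set S : ℕ → (Fin n → ℝ) → ℝ≥0∞ := fun m => ∑ k ∈ Finset.range m, G k
  have hS : ∀ m x, S m x = ∑ k ∈ Finset.range m, G k x := fun m x => Finset.sum_apply _ _ _
  have hmono : Monotone S := fun i j hij x => by
    simp only [hS]
    exact Finset.sum_le_sum_of_subset (Finset.range_subset_range.2 hij)
  simp only [ENNReal.tsum_eq_iSup_nat, ← hS]
  rw [lpNormE_iSup (by linarith) (fun m => by simp only [S]; fun_prop) hmono]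
  refine iSup_le fun m => ?_
  rw [lpNormE_eq_eLpNorm']
  refine (eLpNorm'_sum_le (fun k _ => (hG k).aestronglyMeasurable) hp).trans ?_
  simp only [← lpNormE_eq_eLpNorm']
  exact le_iSup_of_le m le_rfl

end LpNorm

section MaximalOpNorm

variable {p : ℝ}

lemma maximalOpNorm_ne_top (hn : 1 ≤ n) (hp : 1 < p) : maximalOpNorm n p ≠ ∞ := by
  obtain ⟨C, hC, hCg⟩ := exists_lpNormE_HLM_le hn hp
  exact ne_top_of_le_ne_top hC (sInf_le fun f _ _ => hCg _ (by fun_prop))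

lemma lpNormE_HLM_le_maximalOpNorm_mul (hn : 1 ≤ n) (hp : 1 < p)
    {g : (Fin n → ℝ) → ℝ≥0∞} (hg : Measurable g) (hfin : lpNormE n p g ≠ ∞) :
    lpNormE n p (HLM n g) ≤ maximalOpNorm n p * lpNormE n p g := by
  rcases eq_or_ne (lpNormE n p g) 0 with h0 | h0
  · obtain ⟨C, -, hC⟩ := exists_lpNormE_HLM_le hn hp
    simpa [h0] using hC g hg
  set f : (Fin n → ℝ) → ℝ := fun x => (g x).toReal
  have hgf : g =ᵐ[volume] fun x => (‖f x‖₊ : ℝ≥0∞) := by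
    filter_upwards [ae_ne_top_of_lpNormE_ne_top (by linarith) hg hfin] with x hx
    exact (Real.enorm_toReal hx).symm
  have hnorm : lpNormE n p g = lpNorm n p f := lpNormE_congr_ae hgf
  rw [HLM_congr_ae hgf, hnorm, ← ENNReal.div_le_iff (hnorm ▸ h0) (hnorm ▸ hfin)]
  refine le_sInf fun C hC => ?_
  rw [ENNReal.div_le_iff (hnorm ▸ h0) (hnorm ▸ hfin)]
  exact hC f (by fun_prop) (hnorm ▸ hfin).lt_top

lemma indicator_le_HLM_indicator {Q : Set (Fin n → ℝ)} (hQ : IsCube n Q) (x : Fin n → ℝ) :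
    Q.indicator 1 x ≤ HLM n (Q.indicator 1) x := by
  by_cases hx : x ∈ Q
  · refine (le_of_eq ?_).trans (setAvg_le_HLM hQ hx)
    rw [indicator_of_mem hx, setAvg, setLIntegral_congr_fun hQ.measurableSet
      fun y hy => indicator_of_mem hy 1]
    simp only [Pi.one_apply, setLIntegral_one]
    rw [ENNReal.inv_mul_cancel hQ.volume_ne_zero hQ.volume_ne_top]
  · simp [hx]

lemma one_le_maximalOpNorm (hp : 0 < p) : 1 ≤ maximalOpNorm n p := by
  refine le_sInf fun C hC => ?_
  have hQ : IsCube n (closedBall (0 : Fin n → ℝ) 1) := isCube_closedBall 0 one_pos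
  set Q := closedBall (0 : Fin n → ℝ) 1
  set f : (Fin n → ℝ) → ℝ := Q.indicator 1
  have hF : (fun y => (‖f y‖₊ : ℝ≥0∞)) = Q.indicator 1 := by
    ext y; by_cases hy : y ∈ Q <;> simp [f, hy]
  have hFp : ∀ y, (‖f y‖₊ : ℝ≥0∞) ^ p = Q.indicator 1 y := by
    intro y; by_cases hy : y ∈ Q <;> simp [f, hy, ENNReal.zero_rpow_of_pos hp]
  have hnorm : lpNorm n p f = volume Q ^ (1 / p) := by
    rw [_root_.lpNorm, lintegral_congr hFp, lintegral_indicator_one hQ.measurableSet]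
  have hne0 : lpNorm n p f ≠ 0 := by
    rw [hnorm]; exact (ENNReal.rpow_pos (pos_iff_ne_zero.2 hQ.volume_ne_zero) hQ.volume_ne_top).ne'
  have hnet : lpNorm n p f ≠ ∞ := by
    rw [hnorm]; exact ENNReal.rpow_ne_top_of_nonneg (by positivity) hQ.volume_ne_top
  have h := hC f (measurable_one.indicator hQ.measurableSet) hnet.lt_top
  rw [← ENNReal.mul_le_mul_iff_left hne0 hnet, one_mul]
  calc lpNorm n p f = lpNormE n p (Q.indicator 1) := by rw [← hF]; rfl
    _ ≤ lpNormE n p (HLM n (Q.indicator 1)) := lpNormE_mono hp.le (indicator_le_HLM_indicator hQ)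
    _ ≤ C * lpNorm n p f := by rw [← hF]; exact h

end MaximalOpNorm

section Weights

variable {u g : (Fin n → ℝ) → ℝ≥0∞} {Q : Set (Fin n → ℝ)} {K : ℝ≥0∞} {γ p : ℝ}

lemma setAvg_ne_zero (hu : Measurable u) (hu0 : ∀ x, u x ≠ 0) (hQ : IsCube n Q) :
    setAvg n Q u ≠ 0 := by
  refine mul_ne_zero (ENNReal.inv_ne_zero.2 hQ.volume_ne_top) ?_
  rw [← pos_iff_ne_zero, setLIntegral_pos_iff hu]
  simpa [Function.support_eq_univ hu0] using pos_iff_ne_zero.2 hQ.volume_ne_zero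

lemma rpow_neg_le_mul_rpow_neg {a b : ℝ≥0∞} (h : a ≤ K * b) (ha : a ≠ 0) (hK : K ≠ ∞)
    (hγ : 0 ≤ γ) : b ^ (-γ) ≤ K ^ γ * a ^ (-γ) := by
  have hK0 : K ≠ 0 := by rintro rfl; simp_all
  have hab : K⁻¹ * a ≤ b := (ENNReal.inv_mul_le_iff hK0 hK).2 h
  calc b ^ (-γ) ≤ (K⁻¹ * a) ^ (-γ) := by
        rw [ENNReal.rpow_neg, ENNReal.rpow_neg]
        exact ENNReal.inv_le_inv.2 (ENNReal.rpow_le_rpow hab hγ)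
    _ = K ^ γ * a ^ (-γ) := by
        rw [ENNReal.mul_rpow_of_ne_zero (ENNReal.inv_ne_zero.2 hK) ha, ENNReal.inv_rpow,
          ENNReal.rpow_neg, inv_inv]

lemma setAvg_rpow_neg_le (hQ : IsCube n Q) (hu : Measurable u) (hu0 : ∀ x, u x ≠ 0)
    (hK : K ≠ ∞) (huK : ∀ x, HLM n u x ≤ K * u x) (hγ : 0 ≤ γ) :
    setAvg n Q (fun x => u x ^ (-γ)) ≤ K ^ γ * setAvg n Q u ^ (-γ) :=
  setAvg_le_of_forall_le hQ fun x hx => rpow_neg_le_mul_rpow_neg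
    ((setAvg_le_HLM hQ hx).trans (huK x)) (setAvg_ne_zero hu hu0 hQ) hK hγ

lemma isWeight_rpow_neg (hu : Measurable u) (hu0 : ∀ x, u x ≠ 0) (hK : K ≠ ∞)
    (huK : ∀ x, HLM n u x ≤ K * u x) (hγ : 0 ≤ γ) : IsWeight n (fun x => u x ^ (-γ)) := by
  refine ⟨by fun_prop, fun Q hQ => ?_⟩
  rw [setLIntegral_eq_volume_mul_setAvg hQ]
  refine ENNReal.mul_lt_top hQ.volume_ne_top.lt_top
    ((setAvg_rpow_neg_le hQ hu hu0 hK huK hγ).trans_lt (ENNReal.mul_lt_top ?_ ?_))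
  · exact ENNReal.rpow_lt_top_of_nonneg hγ hK
  · rw [lt_top_iff_ne_top, Ne, ENNReal.rpow_eq_top_iff]
    rintro (⟨h, -⟩ | ⟨-, h⟩)
    · exact setAvg_ne_zero hu hu0 hQ h
    · linarith

lemma setAvg_rpow_le (hQ : IsCube n Q) (hg : Measurable g) {θ : ℝ} (hθ0 : 0 ≤ θ) (hθ1 : θ ≤ 1) :
    setAvg n Q (fun y => g y ^ θ) ≤ setAvg n Q g ^ θ := by
  have hV0 := hQ.volume_ne_zero
  have hVt := hQ.volume_ne_top
  have hH := ENNReal.lintegral_mul_norm_pow_le (μ := volume.restrict Q) hg.aemeasurable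
    (aemeasurable_const (b := 1)) hθ0 (sub_nonneg.2 hθ1) (add_sub_cancel θ 1)
  simp only [ENNReal.one_rpow, mul_one, lintegral_const, Measure.restrict_apply_univ, one_mul]
    at hH
  calc setAvg n Q (fun y => g y ^ θ)
      ≤ (volume Q)⁻¹ * ((∫⁻ y in Q, g y) ^ θ * volume Q ^ (1 - θ)) := mul_le_mul_right hH _
    _ = ((volume Q)⁻¹ * volume Q ^ (1 - θ)) * (∫⁻ y in Q, g y) ^ θ := by ring
    _ = setAvg n Q g ^ θ := by
        rw [setAvg, ENNReal.mul_rpow_of_nonneg _ _ hθ0, ← ENNReal.rpow_neg_one,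
          ← ENNReal.rpow_add _ _ hV0 hVt, ← ENNReal.rpow_mul]
        ring_nf

/-- On a cube `Q`, the first average is controlled by `u ≥ K⁻¹ avg_Q u` and the second by
Jensen's inequality. -/
lemma ApConst_rpow_neg_le (hp : 1 < p) (hu : Measurable u) (hu0 : ∀ x, u x ≠ 0)
    (hloc : ∀ Q, IsCube n Q → ∫⁻ y in Q, u y ≠ ∞) (hK : K ≠ ∞)
    (huK : ∀ x, HLM n u x ≤ K * u x) (hγ : 0 ≤ γ) (hγp : γ ≤ p - 1) :
    ApConst n p (fun x => u x ^ (-γ)) ≤ K ^ γ := by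
  refine iSup₂_le fun Q hQ => ?_
  have ha0 := setAvg_ne_zero hu hu0 hQ
  have hat : setAvg n Q u ≠ ∞ :=
    ENNReal.mul_ne_top (ENNReal.inv_ne_top.2 hQ.volume_ne_zero) (hloc Q hQ)
  have hexp : ∀ y, (u y ^ (-γ)) ^ (1 - p / (p - 1)) = u y ^ (γ / (p - 1)) := by
    intro y
    rw [← ENNReal.rpow_mul]
    congr 1
    field_simp [(by linarith : p - 1 ≠ 0)]
    ring
  simp only [hexp]
  calc setAvg n Q (fun x => u x ^ (-γ)) * setAvg n Q (fun y => u y ^ (γ / (p - 1))) ^ (p - 1)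
      ≤ (K ^ γ * setAvg n Q u ^ (-γ)) * (setAvg n Q u ^ (γ / (p - 1))) ^ (p - 1) := by
        gcongr
        · exact setAvg_rpow_neg_le hQ hu hu0 hK huK hγ
        · exact setAvg_rpow_le hQ hu (by positivity) ((div_le_one (by linarith)).2 hγp)
    _ = K ^ γ := by
        rw [← ENNReal.rpow_mul, div_mul_cancel₀ _ (by linarith), mul_assoc,
          ← ENNReal.rpow_add _ _ ha0 hat, neg_add_cancel, ENNReal.rpow_zero, mul_one]

end Weights

section Extrapolation

variable {u G g : (Fin n → ℝ) → ℝ≥0∞} {p q : ℝ}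

lemma setLIntegral_ne_top_of_lpNormE_ne_top (hp : 1 ≤ p) {Q : Set (Fin n → ℝ)} (hQ : IsCube n Q)
    (hg : Measurable g) (h : lpNormE n p g ≠ ∞) : ∫⁻ y in Q, g y ≠ ∞ := by
  have hp0 : 0 < p := by linarith
  have hJ := setAvg_rpow_le hQ (hg.pow_const p) (θ := 1 / p) (by positivity)
    ((div_le_one hp0).2 hp)
  simp only [← ENNReal.rpow_mul, mul_one_div_cancel hp0.ne', ENNReal.rpow_one] at hJ
  rw [setLIntegral_eq_volume_mul_setAvg hQ]
  refine ENNReal.mul_ne_top hQ.volume_ne_top (ne_top_of_le_ne_top ?_ hJ)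
  refine ENNReal.rpow_ne_top_of_nonneg (by positivity) (ENNReal.mul_ne_top
    (ENNReal.inv_ne_top.2 hQ.volume_ne_zero) (ne_top_of_le_ne_top ?_ (setLIntegral_le_lintegral ..)))
  exact lintegral_rpow_ne_top_of_lpNormE_ne_top hp0 h

/-- Hölder's inequality with exponents `q / p` and `q / (q - p)`, after writing
`G ^ p = (G ^ q u ^ (p - q)) ^ (p / q) (u ^ p) ^ (1 - p / q)`. -/
lemma lpNormE_le_wLpNormE_mul (hG : Measurable G) (hu : Measurable u) (hu0 : ∀ x, u x ≠ 0)
    (hut : ∀ᵐ x, u x ≠ ∞) (hp : 0 < p) (hpq : p < q) :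
    lpNormE n p G ≤ wLpNormE n q (fun x => u x ^ (-(q - p))) G * lpNormE n p u ^ (1 - p / q) := by
  have hq : 0 < q := hp.trans hpq
  have hpq' : p / q < 1 := (div_lt_one hq).2 hpq
  have hpt : ∀ᵐ x, G x ^ p = (G x ^ q * u x ^ (-(q - p))) ^ (p / q) * (u x ^ p) ^ (1 - p / q) := by
    filter_upwards [hut] with x hx
    rw [ENNReal.mul_rpow_of_nonneg _ _ (by positivity), ← ENNReal.rpow_mul, ← ENNReal.rpow_mul,
      ← ENNReal.rpow_mul, mul_assoc, ← ENNReal.rpow_add _ _ (hu0 x) hx]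
    field_simp
    ring_nf
    simp
  have hH : ∫⁻ x, G x ^ p ≤ (∫⁻ x, G x ^ q * u x ^ (-(q - p))) ^ (p / q) *
      (∫⁻ x, u x ^ p) ^ (1 - p / q) := by
    rw [lintegral_congr_ae hpt]
    exact ENNReal.lintegral_mul_norm_pow_le (by fun_prop) (by fun_prop) (by positivity)
      (by linarith) (by ring)
  unfold lpNormE wLpNormE
  calc (∫⁻ x, G x ^ p) ^ (1 / p)
      ≤ ((∫⁻ x, G x ^ q * u x ^ (-(q - p))) ^ (p / q) * (∫⁻ x, u x ^ p) ^ (1 - p / q)) ^ (1 / p) :=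
        ENNReal.rpow_le_rpow hH (by positivity)
    _ = _ := by
        rw [ENNReal.mul_rpow_of_nonneg _ _ (by positivity), ← ENNReal.rpow_mul, ← ENNReal.rpow_mul,
          ← ENNReal.rpow_mul]
        congr 2 <;> field_simp

lemma wLpNormE_le_of_le (hGu : ∀ x, G x ≤ u x) (hu0 : ∀ x, u x ≠ 0) (hp : 0 < p) (hpq : p < q) :
    wLpNormE n q (fun x => u x ^ (-(q - p))) G ≤ lpNormE n p u ^ (p / q) := by
  have hq : 0 < q := hp.trans hpq
  have hpt : ∀ x, G x ^ q * u x ^ (-(q - p)) ≤ u x ^ p := by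
    intro x
    rcases eq_or_ne (u x) ∞ with hx | hx
    · rw [hx, ENNReal.top_rpow_of_neg (by linarith), mul_zero]
      exact bot_le
    calc G x ^ q * u x ^ (-(q - p)) ≤ u x ^ q * u x ^ (-(q - p)) := by gcongr; exact hGu x
      _ = u x ^ p := by rw [← ENNReal.rpow_add _ _ (hu0 x) hx]; ring_nf
  unfold lpNormE wLpNormE
  rw [← ENNReal.rpow_mul, show 1 / p * (p / q) = 1 / q by field_simp]
  exact ENNReal.rpow_le_rpow (lintegral_mono hpt) (by positivity)

variable {p₀ β : ℝ} {c : ℝ≥0∞} {T : ((Fin n → ℝ) → ℝ) → (Fin n → ℝ) → ℝ}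
  {f : (Fin n → ℝ) → ℝ}

def WeightedBound (n : ℕ) (p₀ β : ℝ) (c : ℝ≥0∞) (T : ((Fin n → ℝ) → ℝ) → (Fin n → ℝ) → ℝ) :
    Prop :=
  ∀ w : (Fin n → ℝ) → ℝ≥0∞, IsWeight n w → ApConst n p₀ w < ∞ →
    ∀ f : (Fin n → ℝ) → ℝ, Measurable f → wLpNorm n p₀ w f < ∞ →
      wLpNorm n p₀ w (T f) ≤ c * ApConst n p₀ w ^ β * wLpNorm n p₀ w f

/-- Extrapolation through the `A_{p₀}` weight `u ^ (p - p₀)` built from an `A₁` majorant `u` of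
`|f|`. -/
lemma lpNorm_le_of_A1_majorant (hp₀ : 1 < p₀) (hβ : 0 ≤ β) (hbound : WeightedBound n p₀ β c T)
    (hp : 1 < p) (hpp₀ : p < p₀) (hf : Measurable f) (hTf : Measurable (T f))
    {u : (Fin n → ℝ) → ℝ≥0∞} (hu : Measurable u) (hu0 : ∀ x, u x ≠ 0)
    (hfu : ∀ x, (‖f x‖₊ : ℝ≥0∞) ≤ u x) {K : ℝ≥0∞} (hK : K ≠ ∞)
    (huK : ∀ x, HLM n u x ≤ K * u x) (hunorm : lpNormE n p u ≠ ∞) :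
    lpNorm n p (T f) ≤ c * K ^ (β * (p₀ - p)) * lpNormE n p u := by
  have hp0 : 0 < p := by linarith
  set w : (Fin n → ℝ) → ℝ≥0∞ := fun x => u x ^ (-(p₀ - p))
  have hw : IsWeight n w := isWeight_rpow_neg hu hu0 hK huK (by linarith)
  have hAp : ApConst n p₀ w ≤ K ^ (p₀ - p) := ApConst_rpow_neg_le hp₀ hu hu0
    (fun Q hQ => setLIntegral_ne_top_of_lpNormE_ne_top hp.le hQ hu hunorm) hK huK
    (by linarith) (by linarith)
  have hwf : wLpNorm n p₀ w f ≤ lpNormE n p u ^ (p / p₀) := wLpNormE_le_of_le hfu hu0 hp0 hpp₀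
  have hTw := hbound w hw (hAp.trans_lt (ENNReal.rpow_lt_top_of_nonneg (by linarith) hK)) f hf
    (hwf.trans_lt (ENNReal.rpow_lt_top_of_nonneg (by positivity) hunorm))
  calc lpNorm n p (T f) ≤ wLpNorm n p₀ w (T f) * lpNormE n p u ^ (1 - p / p₀) :=
        lpNormE_le_wLpNormE_mul (by fun_prop) hu hu0 (ae_ne_top_of_lpNormE_ne_top hp0 hu hunorm)
          hp0 hpp₀
    _ ≤ c * (K ^ (p₀ - p)) ^ β * lpNormE n p u ^ (p / p₀) * lpNormE n p u ^ (1 - p / p₀) := by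
        gcongr
        exact hTw.trans (by gcongr)
    _ = c * K ^ (β * (p₀ - p)) * lpNormE n p u := by
        rw [mul_assoc, ← ENNReal.rpow_add_of_nonneg _ _ (by positivity)
          (sub_nonneg.2 ((div_le_one (by linarith)).2 hpp₀.le)), ← ENNReal.rpow_mul,
          add_sub_cancel, ENNReal.rpow_one, mul_comm (p₀ - p)]

lemma wLpNormE_one (p : ℝ) (g : (Fin n → ℝ) → ℝ≥0∞) :
    wLpNormE n p (fun _ => 1) g = lpNormE n p g := by
  simp [wLpNormE, lpNormE]

lemma lpNorm_eq_zero_of_weightedBound (hp₀ : 1 < p₀) (hbound : WeightedBound n p₀ β c T)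
    (hp : 0 < p) (hf : Measurable f) (hTf : Measurable (T f)) (h0 : lpNorm n p f = 0) :
    lpNorm n p (T f) = 0 := by
  have h1 : ∀ x, HLM n (fun _ => (1 : ℝ≥0∞)) x ≤ 1 * 1 := fun x =>
    HLM_le fun Q hQ _ => by simpa using setAvg_le_of_forall_le hQ fun _ _ => le_rfl
  have hw := isWeight_rpow_neg measurable_const (fun _ => one_ne_zero) ENNReal.one_ne_top h1 le_rfl
  have hAp := ApConst_rpow_neg_le hp₀ measurable_const (fun _ => one_ne_zero)
    (fun Q hQ => by simpa using hQ.volume_ne_top) ENNReal.one_ne_top h1 le_rfl (by linarith)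
  simp only [ENNReal.one_rpow] at hw hAp
  have hp₀0 : 0 < p₀ := by linarith
  have hF : (fun x => (‖f x‖₊ : ℝ≥0∞)) =ᵐ[volume] 0 := (lpNormE_eq_zero_iff hp (by fun_prop)).1 h0
  have hwf : wLpNorm n p₀ (fun _ => 1) f = 0 := by
    rw [wLpNorm, wLpNormE_one, lpNormE_eq_zero_iff hp₀0 (by fun_prop)]
    exact hF
  have hTw := hbound _ hw (hAp.trans_lt ENNReal.one_lt_top) f hf (by simp [hwf])
  rw [hwf, mul_zero, nonpos_iff_eq_zero, wLpNorm, wLpNormE_one,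
    lpNormE_eq_zero_iff hp₀0 (by fun_prop)] at hTw
  exact (lpNormE_eq_zero_iff hp (by fun_prop)).2 hTw

end Extrapolation

section RubioDeFrancia

variable {p : ℝ} {F : (Fin n → ℝ) → ℝ≥0∞}

noncomputable def rubioDeFrancia (n : ℕ) (p : ℝ) (F : (Fin n → ℝ) → ℝ≥0∞) (x : Fin n → ℝ) :
    ℝ≥0∞ :=
  ∑' k : ℕ, (2 * maximalOpNorm n p)⁻¹ ^ k * (HLM n)^[k] F x

lemma measurable_iterate_HLM (hF : Measurable F) : ∀ k, Measurable ((HLM n)^[k] F)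
  | 0 => hF
  | k + 1 => by rw [Function.iterate_succ_apply']; exact measurable_HLM _

lemma measurable_rubioDeFrancia (hF : Measurable F) : Measurable (rubioDeFrancia n p F) :=
  Measurable.tsum fun k => measurable_const.mul (measurable_iterate_HLM hF k)

lemma le_rubioDeFrancia (x : Fin n → ℝ) : F x ≤ rubioDeFrancia n p F x := by
  simpa [rubioDeFrancia] using
    ENNReal.le_tsum (f := fun k => (2 * maximalOpNorm n p)⁻¹ ^ k * (HLM n)^[k] F x) 0

lemma two_mul_maximalOpNorm_ne_zero (hp : 0 < p) : 2 * maximalOpNorm n p ≠ 0 :=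
  mul_ne_zero two_ne_zero (one_pos.trans_le (one_le_maximalOpNorm hp)).ne'

lemma two_mul_maximalOpNorm_ne_top (hn : 1 ≤ n) (hp : 1 < p) : 2 * maximalOpNorm n p ≠ ∞ :=
  ENNReal.mul_ne_top ENNReal.ofNat_ne_top (maximalOpNorm_ne_top hn hp)

lemma rubioDeFrancia_ne_zero (hn : 1 ≤ n) (hp : 1 < p) (hF : Measurable F)
    (hF0 : ¬ F =ᵐ[volume] 0) (x : Fin n → ℝ) : rubioDeFrancia n p F x ≠ 0 := by
  have h1 : (2 * maximalOpNorm n p)⁻¹ * HLM n F x ≤ rubioDeFrancia n p F x := by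
    simpa [rubioDeFrancia] using
      ENNReal.le_tsum (f := fun k => (2 * maximalOpNorm n p)⁻¹ ^ k * (HLM n)^[k] F x) 1
  refine ((pos_iff_ne_zero.2 (mul_ne_zero ?_ (HLM_ne_zero hF hF0 x))).trans_le h1).ne'
  exact ENNReal.inv_ne_zero.2 (two_mul_maximalOpNorm_ne_top hn hp)

/-- `M` shifts the series by one term. -/
lemma HLM_rubioDeFrancia_le (hn : 1 ≤ n) (hp : 1 < p) (hF : Measurable F) (x : Fin n → ℝ) :
    HLM n (rubioDeFrancia n p F) x ≤ 2 * maximalOpNorm n p * rubioDeFrancia n p F x := by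
  set K := 2 * maximalOpNorm n p
  have hK : K * K⁻¹ = 1 :=
    ENNReal.mul_inv_cancel (two_mul_maximalOpNorm_ne_zero (by linarith))
      (two_mul_maximalOpNorm_ne_top hn hp)
  calc HLM n (rubioDeFrancia n p F) x
      ≤ ∑' k, HLM n (fun y => K⁻¹ ^ k * (HLM n)^[k] F y) x :=
        HLM_tsum_le (fun k => measurable_const.mul (measurable_iterate_HLM hF k)) x
    _ ≤ ∑' k, K⁻¹ ^ k * (HLM n)^[k + 1] F x := by
        refine ENNReal.tsum_le_tsum fun k => ?_
        rw [Function.iterate_succ_apply']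
        exact HLM_const_mul_le _ (measurable_iterate_HLM hF k) x
    _ = K * ∑' k, K⁻¹ ^ (k + 1) * (HLM n)^[k + 1] F x := by
        rw [← ENNReal.tsum_mul_left]
        refine tsum_congr fun k => ?_
        rw [pow_succ', ← mul_assoc, ← mul_assoc, hK, one_mul]
    _ ≤ K * rubioDeFrancia n p F x := by
        gcongr
        exact ENNReal.tsum_comp_le_tsum_of_injective Nat.succ_injective
          (fun k => K⁻¹ ^ k * (HLM n)^[k] F x)

lemma lpNormE_iterate_HLM_le (hn : 1 ≤ n) (hp : 1 < p) (hF : Measurable F)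
    (hfin : lpNormE n p F ≠ ∞) :
    ∀ k, lpNormE n p ((HLM n)^[k] F) ≤ maximalOpNorm n p ^ k * lpNormE n p F
  | 0 => by simp
  | k + 1 => by
      have ih := lpNormE_iterate_HLM_le hn hp hF hfin k
      rw [Function.iterate_succ_apply', pow_succ', mul_assoc]
      refine (lpNormE_HLM_le_maximalOpNorm_mul hn hp (measurable_iterate_HLM hF k)
        (ne_top_of_le_ne_top ?_ ih)).trans (by gcongr)
      exact ENNReal.mul_ne_top (ENNReal.pow_ne_top (maximalOpNorm_ne_top hn hp)) hfin

lemma lpNormE_rubioDeFrancia_le (hn : 1 ≤ n) (hp : 1 < p) (hF : Measurable F)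
    (hfin : lpNormE n p F ≠ ∞) : lpNormE n p (rubioDeFrancia n p F) ≤ 2 * lpNormE n p F := by
  set N := maximalOpNorm n p
  have hN : (2 * N)⁻¹ * N = 2⁻¹ := by
    rw [ENNReal.mul_inv (Or.inl two_ne_zero) (Or.inl ENNReal.ofNat_ne_top), mul_assoc,
      ENNReal.inv_mul_cancel (one_pos.trans_le (one_le_maximalOpNorm (by linarith))).ne'
        (maximalOpNorm_ne_top hn hp), mul_one]
  calc lpNormE n p (rubioDeFrancia n p F)
      ≤ ∑' k, lpNormE n p (fun x => (2 * N)⁻¹ ^ k * (HLM n)^[k] F x) :=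
        lpNormE_tsum_le hp.le fun k => measurable_const.mul (measurable_iterate_HLM hF k)
    _ ≤ ∑' k : ℕ, 2⁻¹ ^ k * lpNormE n p F := by
        refine ENNReal.tsum_le_tsum fun k => ?_
        rw [lpNormE_const_mul (by linarith) _ (measurable_iterate_HLM hF k), ← hN, mul_pow,
          mul_assoc]
        gcongr
        exact lpNormE_iterate_HLM_le hn hp hF hfin k
    _ = 2 * lpNormE n p F := by
        rw [ENNReal.tsum_mul_right, ENNReal.tsum_geometric, ENNReal.one_sub_inv_two, inv_inv]

end RubioDeFrancia

lemma lpNorm_le_of_weightedBound {p₀ β p : ℝ} {c : ℝ≥0∞}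
    {T : ((Fin n → ℝ) → ℝ) → (Fin n → ℝ) → ℝ} {f : (Fin n → ℝ) → ℝ} (hn : 1 ≤ n) (hp₀ : 1 < p₀)
    (hβ : 0 ≤ β) (hbound : WeightedBound n p₀ β c T) (hp : 1 < p) (hpp₀ : p < p₀)
    (hf : Measurable f) (hTf : Measurable (T f)) (hfin : lpNorm n p f < ∞) :
    lpNorm n p (T f) ≤ 2 * c * (2 * maximalOpNorm n p) ^ (β * (p₀ - p)) * lpNorm n p f := by
  set F : (Fin n → ℝ) → ℝ≥0∞ := fun x => ‖f x‖₊
  have hF : Measurable F := by fun_prop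
  -- If `F = 0` a.e. the majorant `rubioDeFrancia n p F` vanishes and yields no weight; use `1`.
  by_cases hF0 : F =ᵐ[volume] 0
  · have h0 : lpNorm n p f = 0 := (lpNormE_eq_zero_iff (by linarith) hF).2 hF0
    simp [lpNorm_eq_zero_of_weightedBound hp₀ hbound (by linarith) hf hTf h0]
  have hR := lpNormE_rubioDeFrancia_le hn hp hF hfin.ne
  calc lpNorm n p (T f)
      ≤ c * (2 * maximalOpNorm n p) ^ (β * (p₀ - p)) * lpNormE n p (rubioDeFrancia n p F) :=
        lpNorm_le_of_A1_majorant hp₀ hβ hbound hp hpp₀ hf hTf (measurable_rubioDeFrancia hF)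
          (rubioDeFrancia_ne_zero hn hp hF hF0) le_rubioDeFrancia
          (two_mul_maximalOpNorm_ne_top hn hp) (HLM_rubioDeFrancia_le hn hp hF)
          (ne_top_of_le_ne_top (ENNReal.mul_ne_top ENNReal.ofNat_ne_top hfin.ne) hR)
    _ ≤ c * (2 * maximalOpNorm n p) ^ (β * (p₀ - p)) * (2 * lpNorm n p f) := by
        gcongr
        exact hR
    _ = 2 * c * (2 * maximalOpNorm n p) ^ (β * (p₀ - p)) * lpNorm n p f := by ring

/-- the weighted bound `‖Tf‖_{L^{p₀}(w)} ≤ c [w]_{A_{p₀}}^β ‖f‖_{L^{p₀}(w)}`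
implies the unweighted estimate `‖T‖_{L^p} ≤ c' ‖M‖_{L^p}^{β(p₀−p)}` for `1 < p < p₀`. -/
theorem statement2 (n : ℕ) (hn : 1 ≤ n) (p₀ : ℝ) (hp₀ : 1 < p₀)
    (β : ℝ) (hβ : 0 ≤ β)
    (T : ((Fin n → ℝ) → ℝ) → (Fin n → ℝ) → ℝ)
    (hT : ∀ f, Measurable f → Measurable (T f))
    (c : ℝ≥0∞) (hc0 : 0 < c) (hc : c < ∞)
    (hbound : ∀ w : (Fin n → ℝ) → ℝ≥0∞, IsWeight n w → ApConst n p₀ w < ∞ →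
      ∀ f : (Fin n → ℝ) → ℝ, Measurable f → wLpNorm n p₀ w f < ∞ →
        wLpNorm n p₀ w (T f) ≤ c * ApConst n p₀ w ^ β * wLpNorm n p₀ w f) :
    ∃ c' : ℝ≥0∞, 0 < c' ∧ c' < ∞ ∧ ∀ p : ℝ, 1 < p → p < p₀ →
      opNorm n p T ≤ c' * maximalOpNorm n p ^ (β * (p₀ - p)) := by
  refine ⟨2 * c * 2 ^ (β * p₀), ?_, ?_, fun p hp hpp₀ => sInf_le fun f hf hfin => ?_⟩
  · exact ENNReal.mul_pos (mul_ne_zero two_ne_zero hc0.ne')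
      (ENNReal.rpow_pos two_pos ENNReal.ofNat_ne_top).ne'
  · exact ENNReal.mul_lt_top (ENNReal.mul_lt_top ENNReal.ofNat_lt_top hc)
      (ENNReal.rpow_lt_top_of_nonneg (by positivity) ENNReal.ofNat_ne_top)
  have h2 : (2 : ℝ≥0∞) ^ (β * (p₀ - p)) ≤ 2 ^ (β * p₀) :=
    ENNReal.rpow_le_rpow_of_exponent_le one_le_two (by nlinarith)
  calc lpNorm n p (T f)
      ≤ 2 * c * (2 * maximalOpNorm n p) ^ (β * (p₀ - p)) * lpNorm n p f :=
        lpNorm_le_of_weightedBound hn hp₀ hβ hbound hp hpp₀ hf (hT f hf) hfin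
    _ ≤ 2 * c * 2 ^ (β * p₀) * maximalOpNorm n p ^ (β * (p₀ - p)) * lpNorm n p f := by
        rw [ENNReal.mul_rpow_of_nonneg _ _ (by nlinarith), ← mul_assoc (2 * c)]
        gcongr
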